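/- arXiv:2104.09475 — 4 statements merged into one kernel-verified Lean document; each statement's English description precedes it below -/
import Mathlib

section
/- Define f : K² → K on a non-archimedean valued field K of characteristic 0 by f(x,y) = x² if |x|⁴ ≤ |y| and f(x,y) = x³ otherwise. Then for every nonzero x with |x| < 1, one has (f(x,x⁴) − f(x,0))/x⁴ = x^{-2} − x^{-1}, and in particular if the valuation is nontrivial, the quotient (f(x,x⁴) − f(x,0))/x⁴ is unbounded as x → 0, so f has no strict derivative at (0,0) with respect to the second variable. -/
open scoped Classical in
/-- The function `f(x,y) = x²` if `|x|⁴ ≤ |y|`, and `x³` otherwise. -/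
noncomputable def fEx {K : Type*} [Field K] (v : AbsoluteValue K ℝ) (x y : K) : K :=
  if v x ^ 4 ≤ v y then x ^ 2 else x ^ 3

/-- For `f(x,y) = x²` if `|x|⁴ ≤ |y|` else `x³`, one has
`(f(x,x⁴) − f(x,0))/x⁴ = x⁻² − x⁻¹` for `0 < |x| < 1`, and if the absolute value is
nontrivial this quotient is unbounded as `x → 0`, so `f` has no strict derivative at `(0,0)`
in the second variable. -/
theorem no_strict_derivative {K : Type*} [Field K] [CharZero K] (v : AbsoluteValue K ℝ)
    (hna : ∀ a b : K, v (a + b) ≤ max (v a) (v b)) :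
    (∀ x : K, x ≠ 0 → v x < 1 →
      (fEx v x (x ^ 4) - fEx v x 0) / x ^ 4 = x⁻¹ ^ 2 - x⁻¹) ∧
    ((∃ a : K, a ≠ 0 ∧ v a < 1) → ∀ M : ℝ, ∃ x : K, x ≠ 0 ∧ v x < 1 ∧
      M < v ((fEx v x (x ^ 4) - fEx v x 0) / x ^ 4)) := by
  have key : ∀ x : K, x ≠ 0 → v x < 1 →
      (fEx v x (x ^ 4) - fEx v x 0) / x ^ 4 = x⁻¹ ^ 2 - x⁻¹ := by
    intro x hx hx1
    have h1 : fEx v x (x ^ 4) = x ^ 2 := if_pos (by rw [map_pow])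
    have h2 : fEx v x 0 = x ^ 3 := by
      apply if_neg
      rw [map_zero, not_le]
      have : 0 < v x := v.pos hx
      positivity
    rw [h1, h2]
    field_simp
  refine ⟨key, ?_⟩
  rintro ⟨a, ha0, ha1⟩ M
  have hva : 0 < v a := v.pos ha0
  have h1a : 1 < (v a)⁻¹ := (one_lt_inv₀ hva).2 ha1
  obtain ⟨n, hn⟩ := pow_unbounded_of_one_lt M h1a
  refine ⟨a ^ (n + 1), pow_ne_zero _ ha0, ?_, ?_⟩
  · rw [map_pow]; exact pow_lt_one₀ hva.le ha1 (Nat.succ_ne_zero n)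
  · set x := a ^ (n + 1) with hxdef
    have hx0 : x ≠ 0 := pow_ne_zero _ ha0
    have hx1 : v x < 1 := by rw [hxdef, map_pow]; exact pow_lt_one₀ hva.le ha1 (Nat.succ_ne_zero n)
    rw [key x hx0 hx1]
    have hvx : 0 < v x := v.pos hx0
    have hinv : 1 < v x⁻¹ := by rw [map_inv₀]; exact (one_lt_inv₀ hvx).2 hx1
    -- v (x⁻¹^2 - x⁻¹) ≥ v x⁻¹ ^ 2
    have hlt : v x⁻¹ < v (x⁻¹ ^ 2) := by
      rw [map_pow, sq]
      nlinarith
    have hge : v (x⁻¹ ^ 2) ≤ v (x⁻¹ ^ 2 - x⁻¹) := by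
      have := hna (x⁻¹ ^ 2 - x⁻¹) x⁻¹
      rw [sub_add_cancel] at this
      rcases max_cases (v (x⁻¹ ^ 2 - x⁻¹)) (v x⁻¹) with ⟨h, _⟩ | ⟨h, _⟩
      · rwa [h] at this
      · rw [h] at this; linarith
    have hMlt : M < v (x⁻¹ ^ 2) := by
      rw [map_pow, map_inv₀, hxdef, map_pow, ← inv_pow, ← pow_mul]
      calc M < (v a)⁻¹ ^ n := hn
        _ ≤ (v a)⁻¹ ^ ((n + 1) * 2) := pow_le_pow_right₀ h1a.le (by omega)
    linarith
end

section
/- Let K be a valued field of mixed characteristic (0, p) with ring of integers O_K. Let O_{K,eqc} be the smallest subring of K containing O_K and ℚ. Then O_{K,eqc} is a valuation ring of K containing O_K, and its residue field has characteristic 0. -/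
/-- The smallest subring of `K` containing the valuation ring and `ℚ`. -/
def eqcSubring (K : Type*) [Field K] {Γ₀ : Type*}
    [LinearOrderedCommGroupWithZero Γ₀] [Valued K Γ₀] : Subring K :=
  Subring.closure (((Valued.v.integer : Subring K) : Set K) ∪ Set.range ((↑) : ℚ → K))

/-- In mixed characteristic `(0,p)`, the subring `O_{K,eqc}` generated by `O_K` and `ℚ` is a
valuation ring of `K` containing `O_K`, and its residue field has characteristic `0`
(every positive integer is a unit of `O_{K,eqc}`). -/
theorem eqcSubring_is_valuation_ring {K : Type*} [Field K] [CharZero K] {Γ₀ : Type*}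
    [LinearOrderedCommGroupWithZero Γ₀] [Valued K Γ₀]
    (hmixed : ∃ p : ℕ, p.Prime ∧ Valued.v (p : K) < 1) :
    (Valued.v.integer : Subring K) ≤ eqcSubring K ∧
    (∀ x : K, x ≠ 0 → x ∈ eqcSubring K ∨ x⁻¹ ∈ eqcSubring K) ∧
    (∀ n : ℕ, 0 < n → ∃ y ∈ eqcSubring K, (n : K) * y = 1) := by
  have hsub : (Valued.v.integer : Subring K) ≤ eqcSubring K := fun x hx =>
    Subring.subset_closure (Or.inl hx)
  refine ⟨hsub, ?_, ?_⟩
  · intro x hx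
    rcases le_total (Valued.v x) 1 with h | h
    · exact Or.inl (hsub h)
    · refine Or.inr (hsub ?_)
      show Valued.v x⁻¹ ≤ 1
      rw [map_inv₀]
      exact inv_le_one_of_one_le₀ h
  · intro n hn
    refine ⟨((n : ℚ)⁻¹ : ℚ) * 1, Subring.mul_mem _ (Subring.subset_closure (Or.inr ⟨_, rfl⟩))
      (Subring.one_mem _), ?_⟩
    push_cast
    field_simp
    exact div_self (Nat.cast_ne_zero.mpr hn.ne')
end

section
/- Let K be a valued field of characteristic 0 with coarsening O_{K,eqc} (the smallest subring containing O_K and ℚ), assumed proper (≠ K), with associated valuation |·|_eqc. Then for x, x' ∈ K: |x|_eqc ≤ |x'|_eqc if and only if there exists a positive integer m with |m·x| ≤ |x'|. -/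
/-- The auxiliary subring `{y | ∃ m > 0, v (m*y) ≤ 1}`. -/
def eqcAux (K : Type*) [Field K] [CharZero K] {Γ₀ : Type*}
    [LinearOrderedCommGroupWithZero Γ₀] [Valued K Γ₀] : Subring K where
  carrier := {y | ∃ m : ℕ, 0 < m ∧ (m : K) * y ∈ (Valued.v.integer : Subring K)}
  zero_mem' := ⟨1, one_pos, by simpa using Subring.zero_mem _⟩
  one_mem' := ⟨1, one_pos, by simpa using Subring.one_mem _⟩
  add_mem' := by
    rintro a b ⟨m, hm, ha⟩ ⟨n, hn, hb⟩
    refine ⟨m * n, Nat.mul_pos hm hn, ?_⟩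
    have : ((m * n : ℕ) : K) * (a + b) = (n : K) * ((m : K) * a) + (m : K) * ((n : K) * b) := by
      push_cast; ring
    rw [this]
    exact Subring.add_mem _ (Subring.mul_mem _ (natCast_mem _ n) ha)
      (Subring.mul_mem _ (natCast_mem _ m) hb)
  mul_mem' := by
    rintro a b ⟨m, hm, ha⟩ ⟨n, hn, hb⟩
    refine ⟨m * n, Nat.mul_pos hm hn, ?_⟩
    have : ((m * n : ℕ) : K) * (a * b) = ((m : K) * a) * ((n : K) * b) := by
      push_cast; ring
    rw [this]
    exact Subring.mul_mem _ ha hb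
  neg_mem' := by
    rintro a ⟨m, hm, ha⟩
    exact ⟨m, hm, by simpa [mul_neg] using Subring.neg_mem _ ha⟩

theorem eqcSubring_eq (K : Type*) [Field K] [CharZero K] {Γ₀ : Type*}
    [LinearOrderedCommGroupWithZero Γ₀] [Valued K Γ₀] :
    eqcSubring K = eqcAux K := by
  apply le_antisymm
  · apply Subring.closure_le.mpr
    rintro y (hy | ⟨q, rfl⟩)
    · exact ⟨1, one_pos, by simpa using hy⟩
    · refine ⟨q.den, q.pos, ?_⟩
      have : ((q.den : K)) * (q : K) = ((q.num : ℤ) : K) := by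
        rw [mul_comm]
        exact_mod_cast congrArg (fun r : ℚ => (r : K)) (Rat.mul_den_eq_num q)
      rw [this]
      exact intCast_mem _ _
  · rintro y ⟨m, hm, hy⟩
    have hm0 : (m : K) ≠ 0 := Nat.cast_ne_zero.mpr hm.ne'
    have h1 : ((m : K) * y) ∈ eqcSubring K :=
      Subring.subset_closure (Set.mem_union_left _ hy)
    have h2 : ((m : K))⁻¹ ∈ eqcSubring K := by
      have : ((m : K))⁻¹ = (((m : ℚ)⁻¹ : ℚ) : K) := by push_cast; ring
      rw [this]
      exact Subring.subset_closure (Set.mem_union_right _ ⟨_, rfl⟩)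
    have := Subring.mul_mem _ h2 h1
    rwa [inv_mul_cancel_left₀ hm0] at this

/-- For the equicharacteristic-zero coarsening `|·|_eqc` (assumed proper) of a valued field of
characteristic `0`: `|x|_eqc ≤ |x'|_eqc` (i.e. `x/x' ∈ O_{K,eqc}` for `x' ≠ 0`) iff
`|m·x| ≤ |x'|` for some positive integer `m`. -/
theorem eqc_le_iff {K : Type*} [Field K] [CharZero K] {Γ₀ : Type*}
    [LinearOrderedCommGroupWithZero Γ₀] [Valued K Γ₀]
    (hproper : eqcSubring K ≠ ⊤) (x x' : K) (hx' : x' ≠ 0) :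
    x / x' ∈ eqcSubring K ↔
      ∃ m : ℕ, 0 < m ∧ Valued.v ((m : K) * x) ≤ Valued.v x' := by
  rw [eqcSubring_eq]
  constructor
  · rintro ⟨m, hm, hy⟩
    refine ⟨m, hm, ?_⟩
    have : Valued.v ((m : K) * (x / x')) ≤ 1 := hy
    rw [← mul_div_assoc, map_div₀] at this
    have hx'v : Valued.v x' ≠ 0 := (Valuation.ne_zero_iff Valued.v).mpr hx'
    rwa [div_le_one₀ (lt_of_le_of_ne zero_le' (Ne.symm hx'v))] at this
  · rintro ⟨m, hm, h⟩
    refine ⟨m, hm, ?_⟩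
    show Valued.v ((m : K) * (x / x')) ≤ 1
    rw [← mul_div_assoc, map_div₀, div_le_one₀]
    · exact h
    · exact lt_of_le_of_ne zero_le' (Ne.symm ((Valuation.ne_zero_iff Valued.v).mpr hx'))
end

section
/- Let K be a valued field of characteristic 0, C ⊆ K a finite set, and suppose |·|_eqc (coarsening by inverting ℚ) is a nontrivial valuation. Then two points x, x' ∈ K lie in the same ball |1|_eqc-next to C (i.e., rv_eqc(x−c) = rv_eqc(x'−c) for all c ∈ C, with respect to the coarsened valuation) if and only if for every positive integer m, rv_{|m|}(x−c) = rv_{|m|}(x'−c) for all c ∈ C (with respect to the original valuation). -/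
section

variable {K : Type*} [Field K] {Γ₀ : Type*} [LinearOrderedCommGroupWithZero Γ₀] [Valued K Γ₀]

theorem Valued.v_intCast_le_one (n : ℤ) : Valued.v (n : K) ≤ 1 :=
  (Valuation.mem_integer_iff _ _).1 (intCast_mem _ n)

theorem Valued.v_natCast_le_one (n : ℕ) : Valued.v (n : K) ≤ 1 := by
  exact_mod_cast Valued.v_intCast_le_one (K := K) n

theorem Valued.v_natCast_mul_le_one {z : K} (hz : Valued.v z ≤ 1) (n : ℕ) :
    Valued.v (n * z) ≤ 1 := by
  rw [Valuation.map_mul]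
  exact mul_le_one' (Valued.v_natCast_le_one n) hz

theorem exists_natCast_mul_le_one_of_mem_eqcSubring [CharZero K] {z : K} (hz : z ∈ eqcSubring K) :
    ∃ m : ℕ, 0 < m ∧ Valued.v (m * z) ≤ 1 := by
  induction hz using Subring.closure_induction with
  | mem w hw =>
    rcases hw with hw | ⟨q, rfl⟩
    · exact ⟨1, one_pos, by simpa using (Valuation.mem_integer_iff _ _).1 hw⟩
    · refine ⟨q.den, q.pos, ?_⟩
      have hq : (q.den : K) * q = q.num := by
        rw [Rat.cast_def, mul_div_cancel₀ _ (Nat.cast_ne_zero.2 q.den_nz)]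
      rw [hq]
      exact Valued.v_intCast_le_one _
  | zero => exact ⟨1, one_pos, by simp⟩
  | one => exact ⟨1, one_pos, by simp⟩
  | neg a _ ha =>
    obtain ⟨m, hm, hma⟩ := ha
    exact ⟨m, hm, by rwa [mul_neg, Valuation.map_neg]⟩
  | add a b _ _ ha hb =>
    obtain ⟨m, hm, hma⟩ := ha
    obtain ⟨n, hn, hnb⟩ := hb
    refine ⟨m * n, Nat.mul_pos hm hn, ?_⟩
    have h : ((m * n : ℕ) : K) * (a + b) = n * (m * a) + m * (n * b) := by push_cast; ring
    rw [h]
    exact (Valuation.map_add _ _ _).trans <| max_le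
      (Valued.v_natCast_mul_le_one hma n) (Valued.v_natCast_mul_le_one hnb m)
  | mul a b _ _ ha hb =>
    obtain ⟨m, hm, hma⟩ := ha
    obtain ⟨n, hn, hnb⟩ := hb
    refine ⟨m * n, Nat.mul_pos hm hn, ?_⟩
    have h : ((m * n : ℕ) : K) * (a * b) = (m * a) * (n * b) := by push_cast; ring
    rw [h, Valuation.map_mul]
    exact mul_le_one' hma hnb

theorem mem_eqcSubring_iff [CharZero K] {z : K} :
    z ∈ eqcSubring K ↔ ∃ m : ℕ, 0 < m ∧ Valued.v (m * z) ≤ 1 := by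
  refine ⟨exists_natCast_mul_le_one_of_mem_eqcSubring, fun ⟨m, hm, hmz⟩ => ?_⟩
  have hmz_mem : (m : K) * z ∈ eqcSubring K := Subring.subset_closure (Or.inl hmz)
  have hm_inv_mem : (m : K)⁻¹ ∈ eqcSubring K :=
    Subring.subset_closure (Or.inr ⟨(m : ℚ)⁻¹, by push_cast; rfl⟩)
  rw [← inv_mul_cancel_left₀ (Nat.cast_ne_zero.2 hm.ne' : (m : K) ≠ 0) z]
  exact mul_mem hm_inv_mem hmz_mem

theorem eq_zero_or_div_notMem_eqcSubring_iff [CharZero K] {a b : K} (hb : b ≠ 0) :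
    (a = 0 ∨ b / a ∉ eqcSubring K) ↔
      ∀ m : ℕ, 0 < m → Valued.v a < Valued.v (m : K) * Valued.v b := by
  rcases eq_or_ne a 0 with rfl | ha
  · simp only [true_or, true_iff, map_zero]
    intro m hm
    exact zero_lt_iff.2 (mul_ne_zero (by simpa using hm.ne') (by simpa using hb))
  · have hva : 0 < Valued.v a := zero_lt_iff.2 (by simpa using ha)
    simp only [ha, false_or, mem_eqcSubring_iff, not_exists, not_and, not_le]
    refine forall₂_congr fun m _ => ?_
    rw [Valuation.map_mul, map_div₀, ← mul_div_assoc, lt_div_iff₀ hva, one_mul]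

end

theorem same_ball_eqc_iff_general {K : Type*} [Field K] [CharZero K] {Γ₀ : Type*}
    [LinearOrderedCommGroupWithZero Γ₀] [Valued K Γ₀]
    (C : Set K) (x x' : K) :
    (∀ c ∈ C, (x = c ↔ x' = c) ∧
        (x ≠ c → (x - x' = 0 ∨ (x - c) / (x - x') ∉ eqcSubring K))) ↔
    (∀ m : ℕ, 0 < m → ∀ c ∈ C, (x = c ↔ x' = c) ∧
        (x ≠ c → Valued.v (x - x') < Valued.v ((m : K)) * Valued.v (x - c))) := by
  have key {c : K} (hxc : x ≠ c) := eq_zero_or_div_notMem_eqcSubring_iff (a := x - x')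
    (sub_ne_zero.2 hxc) (Γ₀ := Γ₀)
  constructor
  · intro h m hm c hc
    exact ⟨(h c hc).1, fun hxc => (key hxc).1 ((h c hc).2 hxc) m hm⟩
  · intro h c hc
    exact ⟨(h 1 one_pos c hc).1, fun hxc => (key hxc).2 fun m hm => (h m hm c hc).2 hxc⟩

/-- Two points `x, x'` lie in the same ball `|1|_eqc`-next to a finite set `C` (i.e.
`|x − x'|_eqc < |x − c|_eqc` for each `c ∈ C`, for the coarsened valuation, with matching
zero fibers) iff for every positive integer `m` they lie in the same ball `|m|`-next to `C`
(i.e. `|x − x'| < |m|·|x − c|` for each `c ∈ C`). -/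
theorem same_ball_eqc_iff {K : Type*} [Field K] [CharZero K] {Γ₀ : Type*}
    [LinearOrderedCommGroupWithZero Γ₀] [Valued K Γ₀]
    (hproper : eqcSubring K ≠ ⊤) (C : Set K) (hC : C.Finite) (x x' : K) :
    (∀ c ∈ C, (x = c ↔ x' = c) ∧
        (x ≠ c → (x - x' = 0 ∨ (x - c) / (x - x') ∉ eqcSubring K))) ↔
    (∀ m : ℕ, 0 < m → ∀ c ∈ C, (x = c ↔ x' = c) ∧
        (x ≠ c → Valued.v (x - x') < Valued.v ((m : K)) * Valued.v (x - c))) :=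
  same_ball_eqc_iff_general (Γ₀ := Γ₀) C x x'
end
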